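/- arXiv:1802.04644 — 9 statements merged into one kernel-verified Lean document; each statement's English description precedes it below -/
import Mathlib

section
/- Let A, B, C, D be real numbers with B ≠ 0, B·D ≥ 0 and B·C > 0, and let δ⁺ = -A + √(A² + B·C), δ⁻ = -A - √(A² + B·C). Then the function ρ defined on [0,T] by ρ(t) = (C·(1 - e^{-(δ⁺-δ⁻)(T-t)}) + D·(δ⁺ - δ⁻·e^{-(δ⁺-δ⁻)(T-t)})) / (B·D·(1 - e^{-(δ⁺-δ⁻)(T-t)}) + δ⁺·e^{-(δ⁺-δ⁻)(T-t)} - δ⁻) is well defined (the denominator never vanishes) and satisfies the scalar Riccati equation ρ'(t) - B·ρ(t)² - 2A·ρ(t) + C = 0 on [0,T] with terminal condition ρ(T) = D. -/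
/-!
Writing `E(t) = exp (-(δ⁺ - δ⁻)(T - t)) ∈ (0, 1]`, the solution is the Möbius transform
`ρ = N / G` of `E`, with `N, G` affine in `E`. Since `E' = (δ⁺ - δ⁻) E`, the quotient rule
turns the Riccati equation into the polynomial identity
`N' G - N G' = B N² + 2A N G - C G²`, which holds because `δ±` are the roots of
`x² + 2A x - BC`. The denominator is positive because `B D ≥ 0`, `δ⁺ > 0 > δ⁻` and
`0 < E ≤ 1`, and at `t = T` we have `E = 1`, so `ρ T = D (δ⁺ - δ⁻) / (δ⁺ - δ⁻) = D`.
-/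

open Real Set

theorem HasDerivAt.div_of_riccati {f g : ℝ → ℝ} {f' g' x A B C : ℝ}
    (hf : HasDerivAt f f' x) (hg : HasDerivAt g g' x) (hx : g x ≠ 0)
    (h : f' * g x - f x * g' = B * f x ^ 2 + 2 * A * f x * g x - C * g x ^ 2) :
    HasDerivAt (fun y => f y / g y) (B * (f x / g x) ^ 2 + 2 * A * (f x / g x) - C) x := by
  refine (hf.div hg hx).congr_deriv ?_
  rw [h]
  field_simp

theorem hasDerivAt_exp_neg_mul_sub (k T t : ℝ) :
    HasDerivAt (fun u => exp (-k * (T - u))) (k * exp (-k * (T - t))) t := by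
  have hlin : HasDerivAt (fun u => -k * (T - u)) k t :=
    (((hasDerivAt_id t).const_sub T).const_mul (-k)).congr_deriv (by ring)
  simpa only [mul_comm] using hlin.exp

theorem riccati_mobius_identity {A B C D s p m E : ℝ} (hs : s ^ 2 = A ^ 2 + B * C)
    (hp : p = -A + s) (hm : m = -A - s) :
    -((p - m) * E * (C + D * m)) * (B * D * (1 - E) + p * E - m)
        - (C * (1 - E) + D * (p - m * E)) * ((p - m) * E * (p - B * D))
      = B * (C * (1 - E) + D * (p - m * E)) ^ 2
        + 2 * A * (C * (1 - E) + D * (p - m * E)) * (B * D * (1 - E) + p * E - m)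
        - C * (B * D * (1 - E) + p * E - m) ^ 2 := by
  subst hp hm
  linear_combination ((C - B * D ^ 2 - 2 * A * D) * (1 - E) ^ 2) * hs

theorem mobius_denom_pos {a p m E : ℝ} (ha : 0 ≤ a) (hp : 0 ≤ p) (hm : m < 0)
    (hE₀ : 0 ≤ E) (hE₁ : E ≤ 1) : 0 < a * (1 - E) + p * E - m := by
  have : 0 ≤ a * (1 - E) := mul_nonneg ha (by linarith)
  have : 0 ≤ p * E := mul_nonneg hp hE₀
  linarith

noncomputable def riccatiMobius (B C D p m T u : ℝ) : ℝ :=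
  (C * (1 - exp (-(p - m) * (T - u))) + D * (p - m * exp (-(p - m) * (T - u)))) /
    (B * D * (1 - exp (-(p - m) * (T - u))) + p * exp (-(p - m) * (T - u)) - m)

theorem hasDerivAt_riccatiMobius {A B C D s p m T t : ℝ} (hs : s ^ 2 = A ^ 2 + B * C)
    (hp : p = -A + s) (hm : m = -A - s)
    (hG₀ : B * D * (1 - exp (-(p - m) * (T - t))) + p * exp (-(p - m) * (T - t)) - m ≠ 0) :
    HasDerivAt (riccatiMobius B C D p m T)
      (B * riccatiMobius B C D p m T t ^ 2 + 2 * A * riccatiMobius B C D p m T t - C) t := by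
  set E := fun u => exp (-(p - m) * (T - u))
  have hE : HasDerivAt E ((p - m) * E t) t := hasDerivAt_exp_neg_mul_sub (p - m) T t
  have hN : HasDerivAt (fun u => C * (1 - E u) + D * (p - m * E u))
      (-((p - m) * E t * (C + D * m))) t :=
    (((hE.const_sub 1).const_mul C).add
      ((hE.const_mul m).const_sub p |>.const_mul D)).congr_deriv (by ring)
  have hG : HasDerivAt (fun u => B * D * (1 - E u) + p * E u - m)
      ((p - m) * E t * (p - B * D)) t :=
    ((((hE.const_sub 1).const_mul (B * D)).add (hE.const_mul p)).sub_const m).congr_deriv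
      (by ring)
  exact hN.div_of_riccati hG hG₀ (riccati_mobius_identity hs hp hm)

theorem stmt_0_general (T A B C D : ℝ) (hBD : 0 ≤ B * D)
    (hBC : 0 < B * C)
    (δp δm : ℝ) (hδp : δp = -A + Real.sqrt (A ^ 2 + B * C))
    (hδm : δm = -A - Real.sqrt (A ^ 2 + B * C))
    (ρ : ℝ → ℝ)
    (hρ : ∀ t, ρ t =
      (C * (1 - Real.exp (-(δp - δm) * (T - t))) +
        D * (δp - δm * Real.exp (-(δp - δm) * (T - t)))) /
      (B * D * (1 - Real.exp (-(δp - δm) * (T - t))) +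
        δp * Real.exp (-(δp - δm) * (T - t)) - δm)) :
    (∀ t ∈ Icc (0 : ℝ) T,
        B * D * (1 - Real.exp (-(δp - δm) * (T - t))) +
          δp * Real.exp (-(δp - δm) * (T - t)) - δm ≠ 0) ∧
    (∀ t ∈ Icc (0 : ℝ) T, HasDerivAt ρ (B * ρ t ^ 2 + 2 * A * ρ t - C) t) ∧
    ρ T = D := by
  have hdisc : 0 < A ^ 2 + B * C := by positivity
  have hs : sqrt (A ^ 2 + B * C) ^ 2 = A ^ 2 + B * C := sq_sqrt hdisc.le
  have hA : |A| < sqrt (A ^ 2 + B * C) := (lt_sqrt (abs_nonneg A)).2 (by rw [sq_abs]; linarith)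
  have hδp_pos : 0 < δp := by rw [hδp]; linarith [le_abs_self A]
  have hδm_neg : δm < 0 := by rw [hδm]; linarith [neg_abs_le A]
  have hden : ∀ t ∈ Icc (0 : ℝ) T, 0 < B * D * (1 - exp (-(δp - δm) * (T - t))) +
      δp * exp (-(δp - δm) * (T - t)) - δm := fun t ht =>
    mobius_denom_pos hBD hδp_pos.le hδm_neg (exp_pos _).le
      (exp_le_one_iff.2 (mul_nonpos_of_nonpos_of_nonneg (by linarith) (by linarith [ht.2])))
  refine ⟨fun t ht => (hden t ht).ne', fun t ht => ?_, ?_⟩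
  · rw [show ρ = riccatiMobius B C D δp δm T from funext hρ]
    exact hasDerivAt_riccatiMobius hs hδp hδm (hden t ht).ne'
  · have hk : δp - δm ≠ 0 := by linarith
    rw [hρ T, sub_self, mul_zero, exp_zero]
    simp only [sub_self, mul_zero, mul_one, zero_add]
    exact mul_div_cancel_right₀ D hk

theorem stmt_0 (T A B C D : ℝ) (hT : 0 < T) (hB : B ≠ 0) (hBD : 0 ≤ B * D)
    (hBC : 0 < B * C)
    (δp δm : ℝ) (hδp : δp = -A + Real.sqrt (A ^ 2 + B * C))
    (hδm : δm = -A - Real.sqrt (A ^ 2 + B * C))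
    (ρ : ℝ → ℝ)
    (hρ : ∀ t, ρ t =
      (C * (1 - Real.exp (-(δp - δm) * (T - t))) +
        D * (δp - δm * Real.exp (-(δp - δm) * (T - t)))) /
      (B * D * (1 - Real.exp (-(δp - δm) * (T - t))) +
        δp * Real.exp (-(δp - δm) * (T - t)) - δm)) :
    (∀ t ∈ Icc (0 : ℝ) T,
        B * D * (1 - Real.exp (-(δp - δm) * (T - t))) +
          δp * Real.exp (-(δp - δm) * (T - t)) - δm ≠ 0) ∧
    (∀ t ∈ Icc (0 : ℝ) T, HasDerivAt ρ (B * ρ t ^ 2 + 2 * A * ρ t - C) t) ∧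
    ρ T = D :=
  stmt_0_general T A B C D hBD hBC δp δm hδp hδm ρ hρ
end

section
/- Let A, B, C, D be real numbers with B > 0, B·D ≥ 0, B·C > 0, and let ρ : [0,T] → ℝ be the unique solution of the Riccati equation ρ' - B·ρ² - 2A·ρ + C = 0 with ρ(T) = D. Then ρ(t) > 0 for all t ∈ [0,T), and ρ(T) = D ≥ 0. -/
open Real Set Filter Topology

lemma slope_neg_right (f : ℝ → ℝ) {c s : ℝ} (hc : c < 0) (hf : HasDerivAt f c s) :
    ∀ᶠ t in 𝓝[>] s, f t < f s := by
  have h := hasDerivAt_iff_tendsto_slope.mp hf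
  have h2 : ∀ᶠ t in 𝓝[≠] s, slope f s t < 0 :=
    h.eventually (eventually_of_mem (Iio_mem_nhds hc) fun x hx => hx)
  have h3 : ∀ᶠ t in 𝓝[>] s, slope f s t < 0 :=
    h2.filter_mono (nhdsWithin_mono s (fun x hx => ne_of_gt hx))
  filter_upwards [h3, eventually_mem_nhdsWithin] with t ht hts
  have hts' : (0:ℝ) < t - s := sub_pos.mpr hts
  rw [slope_def_field] at ht
  have := (div_neg_iff.mp ht)
  rcases this with ⟨h1, h2⟩ | ⟨h1, h2⟩ <;> linarith

lemma slope_neg_left (f : ℝ → ℝ) {c s : ℝ} (hc : c < 0) (hf : HasDerivAt f c s) :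
    ∀ᶠ t in 𝓝[<] s, f s < f t := by
  have h := hasDerivAt_iff_tendsto_slope.mp hf
  have h2 : ∀ᶠ t in 𝓝[≠] s, slope f s t < 0 :=
    h.eventually (eventually_of_mem (Iio_mem_nhds hc) fun x hx => hx)
  have h3 : ∀ᶠ t in 𝓝[<] s, slope f s t < 0 :=
    h2.filter_mono (nhdsWithin_mono s (fun x hx => ne_of_lt hx))
  filter_upwards [h3, eventually_mem_nhdsWithin] with t ht hts
  have hts' : t - s < 0 := sub_neg.mpr hts
  rw [slope_def_field] at ht
  have := (div_neg_iff.mp ht)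
  rcases this with ⟨h1, h2⟩ | ⟨h1, h2⟩ <;> linarith

theorem stmt_1 (T A B C D : ℝ) (hT : 0 < T) (hB : 0 < B) (hBD : 0 ≤ B * D)
    (hBC : 0 < B * C) (ρ : ℝ → ℝ)
    (hode : ∀ t ∈ Icc (0 : ℝ) T, HasDerivAt ρ (B * ρ t ^ 2 + 2 * A * ρ t - C) t)
    (hterm : ρ T = D) :
    (∀ t ∈ Ico (0 : ℝ) T, 0 < ρ t) ∧ 0 ≤ D := by
  have hC : 0 < C := by nlinarith
  have hD : 0 ≤ D := by nlinarith
  refine ⟨?_, hD⟩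
  by_contra h
  push_neg at h
  obtain ⟨t₀, ht₀, hρt₀⟩ := h
  obtain ⟨ht₀0, ht₀T⟩ := ht₀
  -- near T from the left, ρ is positive
  have hnear : ∀ᶠ t in 𝓝[<] T, 0 < ρ t := by
    rcases eq_or_lt_of_le hD with hD0 | hD0
    · -- D = 0 : derivative at T is -C < 0
      have hder := hode T ⟨le_of_lt hT, le_refl T⟩
      have hρT : ρ T = 0 := by rw [hterm, ← hD0]
      have hderval : B * ρ T ^ 2 + 2 * A * ρ T - C = -C := by rw [hρT]; ring
      rw [hderval] at hder
      have := slope_neg_left ρ (by linarith : -C < 0) hder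
      filter_upwards [this] with t ht
      rw [hρT] at ht; exact ht
    · have hcT : ContinuousAt ρ T := (hode T ⟨le_of_lt hT, le_refl T⟩).continuousAt
      have hpos : (0:ℝ) < ρ T := by rw [hterm]; exact hD0
      have : ∀ᶠ t in 𝓝 T, 0 < ρ t :=
        hcT.eventually (eventually_of_mem (Ioi_mem_nhds hpos) fun x hx => hx)
      exact this.filter_mono nhdsWithin_le_nhds
  -- extract an interval (u, T) on which ρ > 0
  obtain ⟨u, huT, hu⟩ := mem_nhdsLT_iff_exists_Ioo_subset.mp hnear
  set v := max u t₀ with hv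
  have hvT : v < T := max_lt huT ht₀T
  set m := (v + T) / 2 with hm
  have hvm : v < m := by simp [hm]; linarith
  have hmT : m < T := by simp [hm]; linarith
  have hIoo : ∀ t, v < t → t < T → 0 < ρ t := fun t h1 h2 =>
    hu ⟨lt_of_le_of_lt (le_max_left u t₀) h1, h2⟩
  -- the set where ρ ≤ 0 in [t₀, m]
  set S : Set ℝ := {t | t ∈ Icc t₀ m ∧ ρ t ≤ 0} with hS
  have hsub : Icc t₀ m ⊆ Icc 0 T := Icc_subset_Icc ht₀0 (le_of_lt hmT)
  have hcont : ContinuousOn ρ (Icc t₀ m) := fun t ht =>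
    (hode t (hsub ht)).continuousAt.continuousWithinAt
  have hScl : IsClosed S := by
    have : S = Icc t₀ m ∩ ρ ⁻¹' (Iic 0) := by
      ext t; simp [hS, and_comm]
    rw [this]
    exact ContinuousOn.preimage_isClosed_of_isClosed hcont isClosed_Icc isClosed_Iic
  have hScomp : IsCompact S := (isCompact_Icc).of_isClosed_subset hScl (fun t ht => ht.1)
  have ht₀m : t₀ < m := lt_of_le_of_lt (le_max_right u t₀) hvm
  have hSne : S.Nonempty := ⟨t₀, ⟨le_refl _, le_of_lt ht₀m⟩, hρt₀⟩
  have hsmem : sSup S ∈ S := hScomp.sSup_mem hSne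
  set σ := sSup S with hσ
  obtain ⟨⟨hσ1, hσ2⟩, hσneg⟩ := hsmem
  have hσT : σ < T := lt_of_le_of_lt hσ2 hmT
  have hposr : ∀ t, σ < t → t < T → 0 < ρ t := by
    intro t h1 h2
    by_cases htm : t ≤ m
    · by_contra hle
      push_neg at hle
      have : t ∈ S := ⟨⟨le_of_lt (lt_of_le_of_lt hσ1 h1), htm⟩, hle⟩
      exact absurd (le_csSup hScomp.bddAbove this) (not_le.mpr h1)
    · exact hIoo t (lt_of_lt_of_le hvm (le_of_not_ge htm)) h2
  have hσmem : σ ∈ Icc (0:ℝ) T := ⟨le_trans ht₀0 hσ1, le_of_lt hσT⟩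
  have hcσ : ContinuousAt ρ σ := (hode σ hσmem).continuousAt
  have hev : ∀ᶠ t in 𝓝[>] σ, 0 < ρ t := by
    filter_upwards [Ioo_mem_nhdsGT_of_mem ⟨le_refl σ, hσT⟩] with t ht
    exact hposr t ht.1 ht.2
  have hσ0 : ρ σ = 0 := by
    have : (0:ℝ) ≤ ρ σ :=
      ge_of_tendsto (hcσ.continuousWithinAt.tendsto) (hev.mono fun t ht => le_of_lt ht)
    linarith
  have hder := hode σ hσmem
  have : B * ρ σ ^ 2 + 2 * A * ρ σ - C = -C := by rw [hσ0]; ring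
  rw [this] at hder
  have hneg := slope_neg_right ρ (by linarith : -C < 0) hder
  obtain ⟨t, ht1, ht2⟩ := (hneg.and hev).exists
  rw [hσ0] at ht1
  linarith
end

section
/- Let ρ : [0,T] → ℝ be the explicit solution of the Riccati equation ρ' - B·ρ² - 2A·ρ + C = 0, ρ(T) = D, with B ≠ 0, B·D ≥ 0, B·C > 0. Then its time derivative is given by ρ'(t) = (B·D² + 2A·D - C)·(δ⁺-δ⁻)²·e^{-(δ⁺-δ⁻)(T-t)} / (B·D·(1-e^{-(δ⁺-δ⁻)(T-t)}) + δ⁺·e^{-(δ⁺-δ⁻)(T-t)} - δ⁻)². In particular, ρ is strictly increasing on [0,T] if B·D² + 2A·D - C > 0, strictly decreasing if B·D² + 2A·D - C < 0, and constant (equal to D) if B·D² + 2A·D - C = 0. -/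
/-!
Write `κ = δ⁺ - δ⁻` and `e(t) = exp (-κ (T - t))`, so that `e' = κ e` and `0 < e ≤ 1` on
`[0, T]`. Then `ρ = (a + b e) / (c + d e)` is a linear fractional function of `e`, with
derivative `(b c - a d) e' / (c + d e)²`, and `δ⁺ + δ⁻ = -2A` turns `b c - a d` into
`κ (B D² + 2 A D - C)`. Since `B D ≥ 0` and `δ⁻ < 0 < δ⁺`, the denominator
`B D (1 - e) + δ⁺ e - δ⁻` is positive, so the sign of `ρ'` is the sign of `B D² + 2 A D - C`.
When that vanishes, the numerator is `D` times the denominator.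
-/

open Real Set

theorem HasDerivAt.affine_div_affine {f : ℝ → ℝ} {f' x : ℝ} (a b c d : ℝ)
    (hf : HasDerivAt f f' x) (hx : c + d * f x ≠ 0) :
    HasDerivAt (fun y => (a + b * f y) / (c + d * f y))
      ((b * c - a * d) * f' / (c + d * f x) ^ 2) x :=
  (((hf.const_mul b).const_add a).fun_div ((hf.const_mul d).const_add c) hx).congr_deriv (by ring)

theorem strictMonoOn_Icc_of_hasDerivAt_pos {f f' : ℝ → ℝ} {a b : ℝ}
    (hf : ∀ x ∈ Icc a b, HasDerivAt f (f' x) x) (hf' : ∀ x ∈ Ioo a b, 0 < f' x) :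
    StrictMonoOn f (Icc a b) :=
  strictMonoOn_of_hasDerivWithinAt_pos (convex_Icc a b)
    (fun x hx => (hf x hx).continuousAt.continuousWithinAt)
    (fun x hx => by
      rw [interior_Icc] at hx ⊢
      exact (hf x (Ioo_subset_Icc_self hx)).hasDerivWithinAt)
    (by rwa [interior_Icc])

theorem strictAntiOn_Icc_of_hasDerivAt_neg {f f' : ℝ → ℝ} {a b : ℝ}
    (hf : ∀ x ∈ Icc a b, HasDerivAt f (f' x) x) (hf' : ∀ x ∈ Ioo a b, f' x < 0) :
    StrictAntiOn f (Icc a b) :=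
  strictAntiOn_of_hasDerivWithinAt_neg (convex_Icc a b)
    (fun x hx => (hf x hx).continuousAt.continuousWithinAt)
    (fun x hx => by
      rw [interior_Icc] at hx ⊢
      exact (hf x (Ioo_subset_Icc_self hx)).hasDerivWithinAt)
    (by rwa [interior_Icc])

theorem abs_lt_sqrt_sq_add {a c : ℝ} (hc : 0 < c) : |a| < √(a ^ 2 + c) := by
  rw [← sqrt_sq_eq_abs]
  exact sqrt_lt_sqrt (sq_nonneg a) (by linarith)

section Riccati

variable {A B C D δp δm : ℝ}

theorem riccati_den_pos (hBD : 0 ≤ B * D) (hp : 0 < δp) (hm : δm < 0) {e : ℝ}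
    (he₀ : 0 ≤ e) (he₁ : e ≤ 1) : 0 < B * D * (1 - e) + δp * e - δm := by
  have : 0 ≤ B * D * (1 - e) := mul_nonneg hBD (by linarith)
  nlinarith

theorem hasDerivAt_riccati (hsum : δp + δm = -(2 * A)) {e : ℝ → ℝ} {t : ℝ}
    (he : HasDerivAt e ((δp - δm) * e t) t) (hden : B * D * (1 - e t) + δp * e t - δm ≠ 0) :
    HasDerivAt
      (fun u => (C * (1 - e u) + D * (δp - δm * e u)) / (B * D * (1 - e u) + δp * e u - δm))
      ((B * D ^ 2 + 2 * A * D - C) * (δp - δm) ^ 2 * e t /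
        (B * D * (1 - e t) + δp * e t - δm) ^ 2) t := by
  have hmob := he.affine_div_affine (C + D * δp) (-(C + D * δm)) (B * D - δm) (δp - B * D)
    (by convert hden using 1; ring)
  convert hmob using 1
  · ext u
    congr 1 <;> ring
  · rw [show B * D * (1 - e t) + δp * e t - δm = B * D - δm + (δp - B * D) * e t by ring]
    congr 1
    linear_combination ((δp - δm) ^ 2 * D * e t) * hsum

end Riccati

theorem stmt_2_general (T A B C D : ℝ) (hBD : 0 ≤ B * D)
    (hBC : 0 < B * C)
    (δp δm : ℝ) (hδp : δp = -A + Real.sqrt (A ^ 2 + B * C))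
    (hδm : δm = -A - Real.sqrt (A ^ 2 + B * C))
    (ρ : ℝ → ℝ)
    (hρ : ∀ t, ρ t =
      (C * (1 - Real.exp (-(δp - δm) * (T - t))) +
        D * (δp - δm * Real.exp (-(δp - δm) * (T - t)))) /
      (B * D * (1 - Real.exp (-(δp - δm) * (T - t))) +
        δp * Real.exp (-(δp - δm) * (T - t)) - δm)) :
    (∀ t ∈ Icc (0 : ℝ) T, HasDerivAt ρ
      ((B * D ^ 2 + 2 * A * D - C) * (δp - δm) ^ 2 * Real.exp (-(δp - δm) * (T - t)) /
        (B * D * (1 - Real.exp (-(δp - δm) * (T - t))) +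
          δp * Real.exp (-(δp - δm) * (T - t)) - δm) ^ 2) t) ∧
    (0 < B * D ^ 2 + 2 * A * D - C → StrictMonoOn ρ (Icc 0 T)) ∧
    (B * D ^ 2 + 2 * A * D - C < 0 → StrictAntiOn ρ (Icc 0 T)) ∧
    (B * D ^ 2 + 2 * A * D - C = 0 → ∀ t ∈ Icc (0 : ℝ) T, ρ t = D) := by
  have hsA := abs_lt_sqrt_sq_add (a := A) hBC
  have hp : 0 < δp := by linarith [le_abs_self A]
  have hm : δm < 0 := by linarith [neg_abs_le A]
  have hsum : δp + δm = -(2 * A) := by rw [hδp, hδm]; ring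
  have hden : ∀ t ∈ Icc (0 : ℝ) T, 0 < B * D * (1 - exp (-(δp - δm) * (T - t))) +
      δp * exp (-(δp - δm) * (T - t)) - δm := fun t ht =>
    riccati_den_pos hBD hp hm (exp_nonneg _)
      (exp_le_one_iff.mpr (mul_nonpos_of_nonpos_of_nonneg (by linarith) (by linarith [ht.2])))
  have hderiv : ∀ t ∈ Icc (0 : ℝ) T, HasDerivAt ρ
      ((B * D ^ 2 + 2 * A * D - C) * (δp - δm) ^ 2 * exp (-(δp - δm) * (T - t)) /
        (B * D * (1 - exp (-(δp - δm) * (T - t))) +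
          δp * exp (-(δp - δm) * (T - t)) - δm) ^ 2) t := fun t ht => by
    rw [funext hρ]
    exact hasDerivAt_riccati hsum (hasDerivAt_exp_neg_mul_sub _ T t) (hden t ht).ne'
  have hκ : 0 < (δp - δm) ^ 2 := pow_pos (by linarith) 2
  refine ⟨hderiv, fun hR => strictMonoOn_Icc_of_hasDerivAt_pos hderiv fun t ht => ?_,
    fun hR => strictAntiOn_Icc_of_hasDerivAt_neg hderiv fun t ht => ?_, fun hR t ht => ?_⟩
  · exact div_pos (by positivity) (pow_pos (hden t (Ioo_subset_Icc_self ht)) 2)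
  · exact div_neg_of_neg_of_pos (mul_neg_of_neg_of_pos (mul_neg_of_neg_of_pos hR hκ) (exp_pos _))
      (pow_pos (hden t (Ioo_subset_Icc_self ht)) 2)
  · rw [hρ t, div_eq_iff (hden t ht).ne']
    linear_combination D * (1 - exp (-(δp - δm) * (T - t))) * hsum -
      (1 - exp (-(δp - δm) * (T - t))) * hR

theorem stmt_2 (T A B C D : ℝ) (hT : 0 < T) (hB : B ≠ 0) (hBD : 0 ≤ B * D)
    (hBC : 0 < B * C)
    (δp δm : ℝ) (hδp : δp = -A + Real.sqrt (A ^ 2 + B * C))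
    (hδm : δm = -A - Real.sqrt (A ^ 2 + B * C))
    (ρ : ℝ → ℝ)
    (hρ : ∀ t, ρ t =
      (C * (1 - Real.exp (-(δp - δm) * (T - t))) +
        D * (δp - δm * Real.exp (-(δp - δm) * (T - t)))) /
      (B * D * (1 - Real.exp (-(δp - δm) * (T - t))) +
        δp * Real.exp (-(δp - δm) * (T - t)) - δm)) :
    (∀ t ∈ Icc (0 : ℝ) T, HasDerivAt ρ
      ((B * D ^ 2 + 2 * A * D - C) * (δp - δm) ^ 2 * Real.exp (-(δp - δm) * (T - t)) /
        (B * D * (1 - Real.exp (-(δp - δm) * (T - t))) +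
          δp * Real.exp (-(δp - δm) * (T - t)) - δm) ^ 2) t) ∧
    (0 < B * D ^ 2 + 2 * A * D - C → StrictMonoOn ρ (Icc 0 T)) ∧
    (B * D ^ 2 + 2 * A * D - C < 0 → StrictAntiOn ρ (Icc 0 T)) ∧
    (B * D ^ 2 + 2 * A * D - C = 0 → ∀ t ∈ Icc (0 : ℝ) T, ρ t = D) :=
  stmt_2_general T A B C D hBD hBC δp δm hδp hδm ρ hρ
end

section
/- Let A, C, D be real numbers with A ≠ 0, and for each B > 0 with B·D ≥ 0 and B·C > 0 let ρ^B be the solution of the Riccati equation (ρ^B)' - B·(ρ^B)² - 2A·ρ^B + C = 0 with ρ^B(T) = D. Then as B → 0⁺, for every fixed t ∈ [0,T], ρ^B(t) converges to ρ⁰(t) := (D - C/(2A))·e^{-2A(T-t)} + C/(2A), the solution of the linear equation (ρ⁰)' - 2A·ρ⁰ + C = 0 with ρ⁰(T) = D. -/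
open Real Set Filter

theorem stmt_3 (T A C D : ℝ) (hT : 0 < T) (hA : A ≠ 0) (hC : 0 < C) (hD : 0 ≤ D)
    (δp δm : ℝ → ℝ)
    (hδp : ∀ B, δp B = -A + Real.sqrt (A ^ 2 + B * C))
    (hδm : ∀ B, δm B = -A - Real.sqrt (A ^ 2 + B * C))
    (ρ : ℝ → ℝ → ℝ)
    (hρ : ∀ B t, ρ B t =
      (C * (1 - Real.exp (-(δp B - δm B) * (T - t))) +
        D * (δp B - δm B * Real.exp (-(δp B - δm B) * (T - t)))) /
      (B * D * (1 - Real.exp (-(δp B - δm B) * (T - t))) +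
        δp B * Real.exp (-(δp B - δm B) * (T - t)) - δm B)) :
    ∀ t ∈ Icc (0 : ℝ) T,
      Tendsto (fun B => ρ B t) (nhdsWithin 0 (Ioi 0))
        (nhds ((D - C / (2 * A)) * Real.exp (-2 * A * (T - t)) + C / (2 * A))) := by
  intro t ht
  simp only [hρ, hδp, hδm]
  have hsq : Real.sqrt (A ^ 2 + 0 * C) = |A| := by
    rw [zero_mul, add_zero, Real.sqrt_sq_eq_abs]
  have hpos : ∀ x : ℝ, 0 < Real.exp x := fun x => Real.exp_pos x
  have hc : ContinuousAt (fun B : ℝ =>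
      (C * (1 - Real.exp (-((-A + Real.sqrt (A ^ 2 + B * C)) - (-A - Real.sqrt (A ^ 2 + B * C))) * (T - t))) +
        D * ((-A + Real.sqrt (A ^ 2 + B * C)) - (-A - Real.sqrt (A ^ 2 + B * C)) * Real.exp (-((-A + Real.sqrt (A ^ 2 + B * C)) - (-A - Real.sqrt (A ^ 2 + B * C))) * (T - t)))) /
      (B * D * (1 - Real.exp (-((-A + Real.sqrt (A ^ 2 + B * C)) - (-A - Real.sqrt (A ^ 2 + B * C))) * (T - t))) +
        (-A + Real.sqrt (A ^ 2 + B * C)) * Real.exp (-((-A + Real.sqrt (A ^ 2 + B * C)) - (-A - Real.sqrt (A ^ 2 + B * C))) * (T - t)) - (-A - Real.sqrt (A ^ 2 + B * C)))) 0 := by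
    apply ContinuousAt.div
    · fun_prop
    · fun_prop
    · rw [hsq]
      rcases hA.lt_or_gt with h | h
      · rw [abs_of_neg h]
        have := hpos (-(-A + -A - (-A - -A)) * (T - t))
        nlinarith [this]
      · rw [abs_of_pos h]
        have := hpos (-(-A + A - (-A - A)) * (T - t))
        nlinarith [this]
  have h2 := hc.tendsto.mono_left (nhdsWithin_le_nhds (s := Ioi (0:ℝ)))
  convert h2 using 2
  rw [hsq]
  rcases hA.lt_or_gt with h | h
  · rw [abs_of_neg h]
    have e1 : -(-A + -A - (-A - -A)) * (T - t) = 2 * A * (T-t) := by ring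
    rw [e1]
    have he : Real.exp (-2 * A * (T - t)) = (Real.exp (2 * A * (T-t)))⁻¹ := by
      rw [← Real.exp_neg]; ring_nf
    have hE := (hpos (2 * A * (T - t))).ne'
    have hden : 0 * D * (1 - Real.exp (2*A*(T-t))) + (-A + -A) * Real.exp (2*A*(T-t)) - (-A - -A) ≠ 0 := by
      have := hpos (2*A*(T-t)); nlinarith
    rw [eq_div_iff hden, he]
    field_simp
    ring
  · rw [abs_of_pos h]
    have e1 : -(-A + A - (-A - A)) * (T - t) = -2 * A * (T-t) := by ring
    rw [e1]
    field_simp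
    ring
end

section
/- Let A = 0, and for each B > 0 with B·D ≥ 0 and B·C > 0 let ρ^B be the solution of the Riccati equation (ρ^B)' - B·(ρ^B)² + C = 0 with ρ^B(T) = D. Then for every fixed t ∈ [0,T], ρ^B(t) → D + C·(T-t) as B → 0⁺, i.e. it converges to the solution of ρ' + C = 0 with ρ(T) = D. -/
/-!
With `s = √(B C)` we have `δ₊ - δ₋ = 2 s`, and dividing numerator and denominator of the
closed form by `s` (using `B / s = s / C`) gives
`(C (1 - e^{-2τs}) / s + D (1 + e^{-2τs})) / ((s / C) D (1 - e^{-2τs}) + 1 + e^{-2τs})`,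
`τ = T - t`. As `B → 0⁺` we have `s → 0`, and since `(1 - e^{-2τs}) / s → 2τ` (the derivative
of the exponential at `0`) this tends to `(2Cτ + 2D) / 2 = D + Cτ`.
-/

open Real Set Filter Topology

theorem tendsto_one_sub_exp_neg_mul_div (a : ℝ) :
    Tendsto (fun s => (1 - exp (-a * s)) / s) (𝓝[≠] 0) (𝓝 a) := by
  have h : HasDerivAt (fun s => 1 - exp (-a * s)) a 0 := by
    simpa using ((hasDerivAt_id (0 : ℝ)).const_mul (-a)).exp.const_sub 1
  simpa [div_eq_inv_mul] using h.tendsto_slope_zero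

theorem tendsto_riccati_rescaled (C D τ : ℝ) :
    Tendsto (fun s => (C * ((1 - exp (-(2 * τ) * s)) / s) + D * (1 + exp (-(2 * τ) * s))) /
      (s / C * D * (1 - exp (-(2 * τ) * s)) + (1 + exp (-(2 * τ) * s))))
      (𝓝[≠] 0) (𝓝 (D + C * τ)) := by
  have hexp : Tendsto (fun s => exp (-(2 * τ) * s)) (𝓝[≠] 0) (𝓝 1) := by
    have : Continuous fun s => exp (-(2 * τ) * s) := by fun_prop
    simpa using this.tendsto 0 |>.mono_left nhdsWithin_le_nhds
  have hid : Tendsto (fun s : ℝ => s) (𝓝[≠] 0) (𝓝 0) :=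
    tendsto_nhdsWithin_of_tendsto_nhds tendsto_id
  have hnum := ((tendsto_one_sub_exp_neg_mul_div (2 * τ)).const_mul C).add
    ((tendsto_const_nhds (x := 1)).add hexp |>.const_mul D)
  have hden := (((hid.div_const C).mul_const D).mul ((tendsto_const_nhds (x := 1)).sub hexp)).add
    ((tendsto_const_nhds (x := 1)).add hexp)
  have hlim : (C * (2 * τ) + D * (1 + 1)) / (0 / C * D * (1 - 1) + (1 + 1)) = D + C * τ := by ring
  rw [← hlim]
  exact hnum.div hden (by norm_num)

theorem riccati_quotient_eq_rescaled {B C D s : ℝ} (E : ℝ) (hs : s ≠ 0) (hC : C ≠ 0)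
    (hsB : s ^ 2 = B * C) :
    (C * (1 - E) + D * (s - -s * E)) / (B * D * (1 - E) + s * E - -s) =
      (C * ((1 - E) / s) + D * (1 + E)) / (s / C * D * (1 - E) + (1 + E)) := by
  rw [← div_div_div_cancel_right₀ hs]
  have hB : B = s ^ 2 / C := by field_simp; linarith
  congr 1
  · field_simp; ring
  · subst hB; field_simp; ring

theorem tendsto_sqrt_mul_nhdsGT_nhdsNE {C : ℝ} (hC : 0 < C) :
    Tendsto (fun B => √(B * C)) (𝓝[>] 0) (𝓝[≠] 0) := by
  refine tendsto_nhdsWithin_iff.mpr ⟨?_, ?_⟩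
  · have : Continuous fun B => √(B * C) := by fun_prop
    simpa using this.tendsto 0 |>.mono_left nhdsWithin_le_nhds
  · filter_upwards [self_mem_nhdsWithin] with B hB
    exact (sqrt_pos.mpr (mul_pos hB hC)).ne'

theorem stmt_4_general (T C D : ℝ) (hC : 0 < C)
    (δp δm : ℝ → ℝ)
    (hδp : ∀ B, δp B = Real.sqrt (B * C))
    (hδm : ∀ B, δm B = -Real.sqrt (B * C))
    (ρ : ℝ → ℝ → ℝ)
    (hρ : ∀ B t, ρ B t =
      (C * (1 - Real.exp (-(δp B - δm B) * (T - t))) +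
        D * (δp B - δm B * Real.exp (-(δp B - δm B) * (T - t)))) /
      (B * D * (1 - Real.exp (-(δp B - δm B) * (T - t))) +
        δp B * Real.exp (-(δp B - δm B) * (T - t)) - δm B)) :
    ∀ t ∈ Icc (0 : ℝ) T,
      Tendsto (fun B => ρ B t) (nhdsWithin 0 (Ioi 0)) (nhds (D + C * (T - t))) := by
  intro t _
  refine ((tendsto_riccati_rescaled C D (T - t)).comp (tendsto_sqrt_mul_nhdsGT_nhdsNE hC)).congr' ?_
  filter_upwards [self_mem_nhdsWithin] with B hB
  have hBC : 0 < B * C := mul_pos hB hC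
  have hexponent : -(√(B * C) - -√(B * C)) * (T - t) = -(2 * (T - t)) * √(B * C) := by ring
  rw [Function.comp_apply, hρ, hδp, hδm, hexponent]
  exact (riccati_quotient_eq_rescaled _ (sqrt_pos.mpr hBC).ne' hC.ne' (sq_sqrt hBC.le)).symm

theorem stmt_4 (T C D : ℝ) (hT : 0 < T) (hC : 0 < C) (hD : 0 ≤ D)
    (δp δm : ℝ → ℝ)
    (hδp : ∀ B, δp B = Real.sqrt (B * C))
    (hδm : ∀ B, δm B = -Real.sqrt (B * C))
    (ρ : ℝ → ℝ → ℝ)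
    (hρ : ∀ B t, ρ B t =
      (C * (1 - Real.exp (-(δp B - δm B) * (T - t))) +
        D * (δp B - δm B * Real.exp (-(δp B - δm B) * (T - t)))) /
      (B * D * (1 - Real.exp (-(δp B - δm B) * (T - t))) +
        δp B * Real.exp (-(δp B - δm B) * (T - t)) - δm B)) :
    ∀ t ∈ Icc (0 : ℝ) T,
      Tendsto (fun B => ρ B t) (nhdsWithin 0 (Ioi 0)) (nhds (D + C * (T - t))) :=
  stmt_4_general T C D hC δp δm hδp hδm ρ hρ
end

section
/- Let u, w : [0,T] → ℝ solve the Riccati equations u' - B·u² - 2A_u·u + C_u = 0, u(T) = D_u, and w' - B·w² - 2A_w·w + C_w = 0, w(T) = D_w, with A_u ≠ A_w. If u(t) = w(t) for all t ∈ [0,T], then u and w are constant, with common value (C_u - C_w)/(2(A_u - A_w)), and moreover B·D² + 2A_u·D - C_u = 0 and B·D² + 2A_w·D - C_w = 0 where D = D_u = D_w. -/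
open Real Set

/- On the interior of `[0,T]` the identity `u = w` forces equal derivatives, and since `A_u ≠ A_w`
this pins `u` to the constant `(C_u - C_w) / (2 (A_u - A_w))`; continuity carries it to the
endpoints. A constant solution has zero derivative, so `D` is a root of both Riccati right-hand
sides. -/

theorem HasDerivAt.unique_of_eqOn {𝕜 F : Type*} [NontriviallyNormedField 𝕜] [NormedAddCommGroup F]
    [NormedSpace 𝕜 F] {f g : 𝕜 → F} {f' g' : F} {s : Set 𝕜} {x : 𝕜} (hs : IsOpen s) (hx : x ∈ s)
    (hfg : EqOn f g s) (hf : HasDerivAt f f' x) (hg : HasDerivAt g g' x) : f' = g' :=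
  hf.unique (hg.congr_of_eventuallyEq (Filter.eventuallyEq_of_mem (hs.mem_nhds hx) hfg))

theorem eq_div_of_riccati_rhs_eq {B Au Aw Cu Cw v : ℝ} (hA : Au ≠ Aw)
    (h : B * v ^ 2 + 2 * Au * v - Cu = B * v ^ 2 + 2 * Aw * v - Cw) :
    v = (Cu - Cw) / (2 * (Au - Aw)) := by
  rw [eq_div_iff (mul_ne_zero two_ne_zero (sub_ne_zero.mpr hA))]
  linarith

theorem stmt_9 (T B Au Aw Cu Cw Du Dw : ℝ) (hT : 0 < T) (hA : Au ≠ Aw)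
    (u w : ℝ → ℝ)
    (hu : ∀ t ∈ Icc (0 : ℝ) T, HasDerivAt u (B * u t ^ 2 + 2 * Au * u t - Cu) t)
    (huT : u T = Du)
    (hw : ∀ t ∈ Icc (0 : ℝ) T, HasDerivAt w (B * w t ^ 2 + 2 * Aw * w t - Cw) t)
    (hwT : w T = Dw)
    (heq : ∀ t ∈ Icc (0 : ℝ) T, u t = w t) :
    (∀ t ∈ Icc (0 : ℝ) T, u t = (Cu - Cw) / (2 * (Au - Aw))) ∧
    Du = Dw ∧
    B * Du ^ 2 + 2 * Au * Du - Cu = 0 ∧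
    B * Du ^ 2 + 2 * Aw * Du - Cw = 0 := by
  set D := (Cu - Cw) / (2 * (Au - Aw))
  have hsub : Ioo 0 T ⊆ Icc 0 T := Ioo_subset_Icc_self
  have huw : EqOn u w (Ioo 0 T) := fun t ht => heq t (hsub ht)
  have huD : EqOn u (fun _ => D) (Ioo 0 T) := fun t ht => by
    have hrhs := (hu t (hsub ht)).unique_of_eqOn isOpen_Ioo ht huw (hw t (hsub ht))
    rw [← huw ht] at hrhs
    exact eq_div_of_riccati_rhs_eq hA hrhs
  have huD_Icc : EqOn u (fun _ => D) (Icc 0 T) :=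
    huD.of_subset_closure (fun t ht => (hu t ht).continuousAt.continuousWithinAt)
      continuousOn_const hsub (closure_Ioo hT.ne).ge
  have hm : T / 2 ∈ Ioo 0 T := ⟨by linarith, by linarith⟩
  have hDu := (hu _ (hsub hm)).unique_of_eqOn isOpen_Ioo hm huD (hasDerivAt_const _ D)
  have hDw := (hw _ (hsub hm)).unique_of_eqOn isOpen_Ioo hm (huw.symm.trans huD)
    (hasDerivAt_const _ D)
  have hTmem : T ∈ Icc 0 T := ⟨hT.le, le_rfl⟩
  have hDuD : Du = D := huT ▸ huD_Icc hTmem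
  rw [← huw hm, huD hm] at hDw
  rw [huD hm] at hDu
  exact ⟨huD_Icc, by rw [← huT, ← hwT, heq T hTmem], hDuD ▸ hDu, hDuD ▸ hDw⟩
end

section
/- Fix A < 0 and C > 0, D ≥ 0. For each B > 0 let ρ^B be the solution of ρ' - B·ρ² - 2A·ρ + C = 0 with ρ^B(T) = D (given by the explicit formula). Then there exist B* > 0 and M < ∞ such that |ρ^B(t)| ≤ M for all t ∈ [0,T] and all 0 < B ≤ B*. -/
open Real Set

theorem stmt_13 (T A C D : ℝ) (hT : 0 < T) (hA : A < 0) (hC : 0 < C) (hD : 0 ≤ D)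
    (δp δm : ℝ → ℝ)
    (hδp : ∀ B, δp B = -A + Real.sqrt (A ^ 2 + B * C))
    (hδm : ∀ B, δm B = -A - Real.sqrt (A ^ 2 + B * C))
    (ρ : ℝ → ℝ → ℝ)
    (hρ : ∀ B t, ρ B t =
      (C * (1 - Real.exp (-(δp B - δm B) * (T - t))) +
        D * (δp B - δm B * Real.exp (-(δp B - δm B) * (T - t)))) /
      (B * D * (1 - Real.exp (-(δp B - δm B) * (T - t))) +
        δp B * Real.exp (-(δp B - δm B) * (T - t)) - δm B)) :
    ∃ Bstar > (0 : ℝ), ∃ M : ℝ,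
      ∀ B, 0 < B → B ≤ Bstar → ∀ t ∈ Icc (0 : ℝ) T, |ρ B t| ≤ M := by
  set R := Real.sqrt (A ^ 2 + C) with hRdef
  have hRnn : 0 ≤ R := Real.sqrt_nonneg _
  have hAR : -A ≤ R := by
    rw [hRdef]
    calc -A = Real.sqrt (A ^ 2) := by rw [Real.sqrt_sq_eq_abs, abs_of_neg hA]
    _ ≤ Real.sqrt (A ^ 2 + C) := Real.sqrt_le_sqrt (by linarith)
  set d := (-A) * Real.exp (-(2 * R) * T) with hddef
  have hd : 0 < d := mul_pos (by linarith) (Real.exp_pos _)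
  refine ⟨1, one_pos, (C + 3 * D * R) / d, ?_⟩
  intro B hB hB1 t ht
  obtain ⟨ht0, htT⟩ := ht
  set r := Real.sqrt (A ^ 2 + B * C) with hrdef
  have hrnn : 0 ≤ r := Real.sqrt_nonneg _
  have hAr : -A ≤ r := by
    rw [hrdef]
    calc -A = Real.sqrt (A ^ 2) := by rw [Real.sqrt_sq_eq_abs, abs_of_neg hA]
    _ ≤ Real.sqrt (A ^ 2 + B * C) := Real.sqrt_le_sqrt (by nlinarith)
  have hrR : r ≤ R := Real.sqrt_le_sqrt (by nlinarith)
  set E := Real.exp (-(2 * r) * (T - t)) with hEdef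
  have hE0 : 0 < E := Real.exp_pos _
  have hE1 : E ≤ 1 := Real.exp_le_one_iff.2 (by nlinarith)
  have hElb : Real.exp (-(2 * R) * T) ≤ E := Real.exp_le_exp.2 (by nlinarith)
  have hexp : Real.exp (-(δp B - δm B) * (T - t)) = E := by
    rw [hEdef, hδp, hδm]; congr 1; ring
  rw [hρ, hexp, hδp, hδm]
  have hnum_nn : 0 ≤ C * (1 - E) + D * ((-A + r) - (-A - r) * E) := by
    have h3 : 0 ≤ (A + r) * E := mul_nonneg (by linarith) hE0.le
    nlinarith [mul_nonneg hC.le (by linarith : (0:ℝ) ≤ 1 - E)]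
  have hden : d ≤ B * D * (1 - E) + (-A + r) * E - (-A - r) := by
    have h1 : d ≤ (-A) * E := mul_le_mul_of_nonneg_left hElb (by linarith)
    have h2 : (-A) * E ≤ (-A + r) * E := mul_le_mul_of_nonneg_right (by linarith) hE0.le
    have h4 : 0 ≤ B * D * (1 - E) :=
      mul_nonneg (mul_nonneg hB.le hD) (by linarith)
    linarith
  have hnum_ub : C * (1 - E) + D * ((-A + r) - (-A - r) * E) ≤ C + 3 * D * R := by
    have h5 : C * (1 - E) ≤ C := by nlinarith
    have h6 : (A + r) * E ≤ R := by nlinarith [mul_le_mul_of_nonneg_left hE1 (by linarith : (0:ℝ) ≤ A + r)]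
    have h7 : (-A + r) - (-A - r) * E ≤ 3 * R := by nlinarith
    nlinarith [mul_le_mul_of_nonneg_left h7 hD]
  rw [abs_of_nonneg (div_nonneg hnum_nn (by linarith))]
  exact div_le_div₀ (by positivity) hnum_ub hd hden
end

section
/- Let δ⁺_B = -A + √(A² + B·C) and δ⁻_B = -A - √(A² + B·C) with C > 0 and A fixed. Then as B → ∞: δ⁺_B/√B → √C, δ⁻_B/√B → -√C, and δ⁺_B - δ⁻_B → ∞. Consequently, for the explicit Riccati solution ρ^B with terminal condition D > 0, for every fixed t ∈ [0,T) one has √B·ρ^B(t) → √C as B → ∞ (i.e. ρ^B(t) ~ √(C/B)). -/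
open Real Set Filter

private lemma sqrtTop : Tendsto Real.sqrt atTop atTop := by
  apply tendsto_atTop_atTop.mpr
  intro b
  exact ⟨b ^ 2, fun a ha => by
    calc b ≤ |b| := le_abs_self b
    _ = Real.sqrt (b ^ 2) := (Real.sqrt_sq_eq_abs b).symm
    _ ≤ Real.sqrt a := Real.sqrt_le_sqrt ha⟩

theorem stmt_14 (T A C D : ℝ) (hT : 0 < T) (hC : 0 < C) (hD : 0 < D)
    (δp δm : ℝ → ℝ)
    (hδp : ∀ B, δp B = -A + Real.sqrt (A ^ 2 + B * C))
    (hδm : ∀ B, δm B = -A - Real.sqrt (A ^ 2 + B * C))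
    (ρ : ℝ → ℝ → ℝ)
    (hρ : ∀ B t, ρ B t =
      (C * (1 - Real.exp (-(δp B - δm B) * (T - t))) +
        D * (δp B - δm B * Real.exp (-(δp B - δm B) * (T - t)))) /
      (B * D * (1 - Real.exp (-(δp B - δm B) * (T - t))) +
        δp B * Real.exp (-(δp B - δm B) * (T - t)) - δm B)) :
    Tendsto (fun B => δp B / Real.sqrt B) atTop (nhds (Real.sqrt C)) ∧
    Tendsto (fun B => δm B / Real.sqrt B) atTop (nhds (-Real.sqrt C)) ∧
    Tendsto (fun B => δp B - δm B) atTop atTop ∧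
    (∀ t ∈ Ico (0 : ℝ) T,
      Tendsto (fun B => Real.sqrt B * ρ B t) atTop (nhds (Real.sqrt C))) := by
  -- basic limits
  have hinv : Tendsto (fun B : ℝ => (Real.sqrt B)⁻¹) atTop (nhds 0) :=
    tendsto_inv_atTop_zero.comp sqrtTop
  have hAdiv : Tendsto (fun B : ℝ => A / Real.sqrt B) atTop (nhds 0) :=
    Tendsto.div_atTop tendsto_const_nhds sqrtTop
  have hsq : Tendsto (fun B : ℝ => Real.sqrt (A ^ 2 + B * C) / Real.sqrt B)
      atTop (nhds (Real.sqrt C)) := by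
    have h1 : Tendsto (fun B : ℝ => A ^ 2 / B + C) atTop (nhds C) := by
      have := (Tendsto.div_atTop (tendsto_const_nhds (x := A ^ 2)) tendsto_id).add_const C
      simpa using this
    have h2 : Tendsto (fun B : ℝ => Real.sqrt (A ^ 2 / B + C)) atTop
        (nhds (Real.sqrt C)) :=
      (Real.continuous_sqrt.continuousAt.tendsto).comp h1
    apply h2.congr'
    filter_upwards [eventually_gt_atTop (0 : ℝ)] with B hB
    rw [show A ^ 2 / B + C = (A ^ 2 + B * C) / B by field_simp,
      Real.sqrt_div (by positivity)]
  have hp : Tendsto (fun B => δp B / Real.sqrt B) atTop (nhds (Real.sqrt C)) := by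
    have : (fun B => δp B / Real.sqrt B)
        = fun B => -(A / Real.sqrt B) + Real.sqrt (A ^ 2 + B * C) / Real.sqrt B := by
      funext B; rw [hδp]; ring
    rw [this]
    simpa using (hAdiv.neg.add hsq)
  have hm : Tendsto (fun B => δm B / Real.sqrt B) atTop (nhds (-Real.sqrt C)) := by
    have : (fun B => δm B / Real.sqrt B)
        = fun B => -(A / Real.sqrt B) - Real.sqrt (A ^ 2 + B * C) / Real.sqrt B := by
      funext B; rw [hδm]; ring
    rw [this]
    simpa using (hAdiv.neg.sub hsq)
  have hdiff : Tendsto (fun B => δp B - δm B) atTop atTop := by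
    have h1 : Tendsto (fun B : ℝ => A ^ 2 + B * C) atTop atTop :=
      tendsto_atTop_add_const_left _ _ ((tendsto_id.atTop_mul_const hC))
    have h2 : Tendsto (fun B : ℝ => 2 * Real.sqrt (A ^ 2 + B * C)) atTop atTop :=
      (sqrtTop.comp h1).const_mul_atTop two_pos
    apply h2.congr
    intro B; rw [hδp, hδm]; ring
  refine ⟨hp, hm, hdiff, ?_⟩
  intro t ht
  have hs : 0 < T - t := sub_pos.mpr ht.2
  set E : ℝ → ℝ := fun B => Real.exp (-(δp B - δm B) * (T - t)) with hE
  have hE0 : Tendsto E atTop (nhds 0) := by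
    apply Real.tendsto_exp_atBot.comp
    exact (tendsto_neg_atTop_atBot.comp hdiff).atBot_mul_const hs
  -- numerator over √B
  have hNum : Tendsto (fun B => (C * (1 - E B) + D * (δp B - δm B * E B)) / Real.sqrt B)
      atTop (nhds (D * Real.sqrt C)) := by
    have heq : (fun B => (C * (1 - E B) + D * (δp B - δm B * E B)) / Real.sqrt B)
        = fun B => C * (1 - E B) * (Real.sqrt B)⁻¹
          + D * (δp B / Real.sqrt B - δm B / Real.sqrt B * E B) := by
      funext B; ring
    rw [heq]
    have h1 : Tendsto (fun B => C * (1 - E B) * (Real.sqrt B)⁻¹) atTop (nhds 0) := by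
      have := ((tendsto_const_nhds (x := C)).mul ((tendsto_const_nhds (x := (1:ℝ))).sub hE0)).mul hinv
      simpa using this
    have h2 : Tendsto (fun B => D * (δp B / Real.sqrt B - δm B / Real.sqrt B * E B))
        atTop (nhds (D * Real.sqrt C)) := by
      have := (tendsto_const_nhds (x := D)).mul (hp.sub (hm.mul hE0))
      simpa using this
    simpa using h1.add h2
  -- δp/B and δm/B go to 0
  have hpB : Tendsto (fun B => δp B / B) atTop (nhds 0) := by
    have h := hp.mul hinv
    rw [mul_zero] at h
    apply h.congr'
    filter_upwards [eventually_gt_atTop (0 : ℝ)] with B hB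
    rw [show δp B / Real.sqrt B * (Real.sqrt B)⁻¹
      = δp B / (Real.sqrt B * Real.sqrt B) by ring, Real.mul_self_sqrt hB.le]
  have hmB : Tendsto (fun B => δm B / B) atTop (nhds 0) := by
    have h := hm.mul hinv
    rw [mul_zero] at h
    apply h.congr'
    filter_upwards [eventually_gt_atTop (0 : ℝ)] with B hB
    rw [show δm B / Real.sqrt B * (Real.sqrt B)⁻¹
      = δm B / (Real.sqrt B * Real.sqrt B) by ring, Real.mul_self_sqrt hB.le]
  -- denominator over B
  have hDen : Tendsto
      (fun B => (B * D * (1 - E B) + δp B * E B - δm B) / B) atTop (nhds D) := by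
    have h : Tendsto (fun B => D * (1 - E B) + (δp B / B) * E B - δm B / B)
        atTop (nhds D) := by
      have := (((tendsto_const_nhds (x := D)).mul
        ((tendsto_const_nhds (x := (1:ℝ))).sub hE0)).add (hpB.mul hE0)).sub hmB
      simpa using this
    apply h.congr'
    filter_upwards [eventually_gt_atTop (0 : ℝ)] with B hB
    field_simp
  have hDne : ∀ᶠ B in atTop,
      (B * D * (1 - E B) + δp B * E B - δm B) / B ≠ 0 :=
    hDen.eventually_ne hD.ne'
  have hfin := hNum.div hDen hD.ne'
  rw [show D * Real.sqrt C / D = Real.sqrt C by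
    rw [mul_comm, mul_div_assoc, div_self hD.ne', mul_one]] at hfin
  apply hfin.congr'
  filter_upwards [eventually_gt_atTop (0 : ℝ), hDne] with B hB hne
  have hBne : B ≠ 0 := hB.ne'
  have hsb : Real.sqrt B ≠ 0 := (Real.sqrt_pos.mpr hB).ne'
  have hdne : (B * D * (1 - E B) + δp B * E B - δm B) ≠ 0 := by
    intro h0
    apply hne
    rw [h0, zero_div]
  have hss : Real.sqrt B * Real.sqrt B = B := Real.mul_self_sqrt hB.le
  have key : ∀ n dd : ℝ, dd ≠ 0 →
      (n / Real.sqrt B) / (dd / B) = Real.sqrt B * (n / dd) := by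
    intro n dd h
    rw [div_div_div_comm, Real.sqrt_div_self, div_inv_eq_mul, mul_comm]
  simp only [Pi.div_apply]
  rw [hρ, hE]
  exact key _ _ hdne
end

section
/- Let η : [0,T] → ℝ be continuous and nonnegative, let B ≥ 0, A ≤ 0, C ≥ 0, D ≥ 0, and suppose η satisfies η' - B·η² - 2A·η + C = 0 with η(T) = D. Define l(t) = ∫₀ᵗ exp(-2B·∫ₛᵗ η(u) du) ds. Then ∫₀ᵀ B·η(t)²·l(t) dt ≤ ∫₀ᵀ η(t) dt. -/
open Real Set

/-!
Writing `l` by the variation-of-constants formula shows `l' = -2Bηl + 1` and `l 0 = 0`, `l ≥ 0`.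
Together with the Riccati equation this gives `(η l)' = η - Bη²l + (2Aη - C) l`, so integrating
over `[0, T]` yields `∫ Bη²l = ∫ η - η T l T + ∫ (2Aη - C) l`, and the last two terms are `≤ 0`.
Differentiability of `l` is obtained by first extending `η` continuously beyond `[0, T]`.
-/

/-- The variation-of-constants solution of `l' = c * η * l + 1`, `l a = 0`. -/
noncomputable def duhamel (c : ℝ) (η : ℝ → ℝ) (a t : ℝ) : ℝ :=
  ∫ s in a..t, exp (c * ∫ u in s..t, η u)

@[simp]
lemma duhamel_self (c : ℝ) (η : ℝ → ℝ) (a : ℝ) : duhamel c η a a = 0 :=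
  intervalIntegral.integral_same

lemma duhamel_nonneg {c a t : ℝ} (η : ℝ → ℝ) (hat : a ≤ t) : 0 ≤ duhamel c η a t :=
  intervalIntegral.integral_nonneg hat fun _ _ => (exp_pos _).le

lemma duhamel_eq_exp_mul {c : ℝ} {g : ℝ → ℝ} (hg : Continuous g) (a t : ℝ) :
    duhamel c g a t =
      exp (c * ∫ u in a..t, g u) * ∫ s in a..t, exp (-(c * ∫ u in a..s, g u)) := by
  rw [duhamel, ← intervalIntegral.integral_const_mul]
  refine intervalIntegral.integral_congr fun s _ => ?_
  rw [← intervalIntegral.integral_interval_sub_left (hg.intervalIntegrable _ _)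
    (hg.intervalIntegrable _ _), ← exp_add, mul_sub, sub_eq_add_neg]

lemma hasDerivAt_duhamel {c : ℝ} {g : ℝ → ℝ} (hg : Continuous g) (a t : ℝ) :
    HasDerivAt (duhamel c g a) (c * g t * duhamel c g a t + 1) t := by
  have hG : ∀ t, HasDerivAt (fun t => ∫ u in a..t, g u) (g t) t := fun t =>
    (hg.integral_hasStrictDerivAt a t).hasDerivAt
  have hexp : Continuous fun s => exp (-(c * ∫ u in a..s, g u)) := by
    have : Continuous fun t => ∫ u in a..t, g u :=
      continuous_iff_continuousAt.2 fun t => (hG t).continuousAt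
    fun_prop
  rw [funext (duhamel_eq_exp_mul hg a)]
  refine (((hG t).const_mul c).exp.mul (hexp.integral_hasStrictDerivAt a t).hasDerivAt).congr_deriv ?_
  rw [← exp_add, add_neg_cancel, exp_zero]
  ring

lemma eqOn_duhamel {c a b : ℝ} {f g : ℝ → ℝ} (hfg : EqOn f g (Icc a b)) :
    EqOn (duhamel c f a) (duhamel c g a) (Icc a b) := by
  intro t ht
  refine intervalIntegral.integral_congr fun s hs => ?_
  rw [uIcc_of_le ht.1] at hs
  have hst : uIcc s t ⊆ Icc a b := by
    rw [uIcc_of_le hs.2]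
    exact Icc_subset_Icc hs.1 ht.2
  simp only [intervalIntegral.integral_congr fun u hu => hfg (hst hu)]

lemma exists_continuous_eqOn_Icc {a b : ℝ} {f : ℝ → ℝ} (hab : a ≤ b)
    (hf : ContinuousOn f (Icc a b)) : ∃ g : ℝ → ℝ, Continuous g ∧ EqOn g f (Icc a b) :=
  ⟨fun t => f (projIcc a b hab t),
    hf.comp_continuous (continuous_subtype_val.comp continuous_projIcc) fun t =>
      (projIcc a b hab t).2,
    fun t ht => by simp [projIcc_of_mem hab ht]⟩

lemma continuousOn_duhamel {c a b : ℝ} {η : ℝ → ℝ} (hab : a ≤ b)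
    (hη : ContinuousOn η (Icc a b)) : ContinuousOn (duhamel c η a) (Icc a b) := by
  obtain ⟨g, hg, hgη⟩ := exists_continuous_eqOn_Icc hab hη
  have hL : Continuous (duhamel c g a) :=
    continuous_iff_continuousAt.2 fun t => (hasDerivAt_duhamel hg a t).continuousAt
  exact hL.continuousOn.congr (eqOn_duhamel hgη).symm

lemma hasDerivAt_duhamel_of_continuousOn {c a b t : ℝ} {η : ℝ → ℝ} (hab : a ≤ b)
    (hη : ContinuousOn η (Icc a b)) (ht : t ∈ Ioo a b) :
    HasDerivAt (duhamel c η a) (c * η t * duhamel c η a t + 1) t := by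
  obtain ⟨g, hg, hgη⟩ := exists_continuous_eqOn_Icc hab hη
  have hL : EqOn (duhamel c g a) (duhamel c η a) (Icc a b) := eqOn_duhamel hgη
  have hnear : duhamel c η a =ᶠ[nhds t] duhamel c g a :=
    Filter.eventuallyEq_of_mem (Ioo_mem_nhds ht.1 ht.2) fun s hs =>
      (hL (Ioo_subset_Icc_self hs)).symm
  have := (hasDerivAt_duhamel hg a t).congr_of_eventuallyEq hnear
  rwa [hgη (Ioo_subset_Icc_self ht), hL (Ioo_subset_Icc_self ht)] at this

lemma integral_mul_sq_mul_le_integral_of_riccati {a b A B C : ℝ} {η l : ℝ → ℝ} (hab : a ≤ b)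
    (hA : A ≤ 0) (hC : 0 ≤ C)
    (hη : ∀ t ∈ Icc a b, HasDerivAt η (B * η t ^ 2 + 2 * A * η t - C) t)
    (hηn : ∀ t ∈ Icc a b, 0 ≤ η t) (hlc : ContinuousOn l (Icc a b))
    (hl : ∀ t ∈ Ioo a b, HasDerivAt l (-2 * B * η t * l t + 1) t) (hla : l a = 0)
    (hln : ∀ t ∈ Icc a b, 0 ≤ l t) :
    ∫ t in a..b, B * η t ^ 2 * l t ≤ ∫ t in a..b, η t := by
  have hηc : ContinuousOn η (Icc a b) := fun t ht =>
    (hη t ht).continuousAt.continuousWithinAt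
  have hψ : ContinuousOn (fun t => η t - B * η t ^ 2 * l t + (2 * A * η t - C) * l t) (Icc a b) := by
    fun_prop
  have hηl : ∫ t in a..b, (η t - B * η t ^ 2 * l t + (2 * A * η t - C) * l t) = η b * l b := by
    rw [intervalIntegral.integral_eq_sub_of_hasDerivAt_of_le hab (hηc.mul hlc)
      (fun t ht => ((hη t (Ioo_subset_Icc_self ht)).mul (hl t ht)).congr_deriv (by ring))
      (hψ.intervalIntegrable_of_Icc hab),
      Pi.mul_apply, Pi.mul_apply, hla, mul_zero, sub_zero]
  calc ∫ t in a..b, B * η t ^ 2 * l t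
      ≤ ∫ t in a..b, (η t - (η t - B * η t ^ 2 * l t + (2 * A * η t - C) * l t)) := by
        refine intervalIntegral.integral_mono_on hab ?_ ?_ fun t ht => ?_
        · exact ContinuousOn.intervalIntegrable_of_Icc hab (by fun_prop)
        · exact (hηc.sub hψ).intervalIntegrable_of_Icc hab
        nlinarith [mul_nonneg (mul_nonneg (neg_nonneg.2 hA) (hηn t ht)) (hln t ht),
          mul_nonneg hC (hln t ht)]
    _ = (∫ t in a..b, η t) - η b * l b := by
        rw [intervalIntegral.integral_sub (hηc.intervalIntegrable_of_Icc hab)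
          (hψ.intervalIntegrable_of_Icc hab), hηl]
    _ ≤ ∫ t in a..b, η t :=
        sub_le_self _ (mul_nonneg (hηn b ⟨hab, le_rfl⟩) (hln b ⟨hab, le_rfl⟩))

theorem stmt_15_general (T A B C : ℝ) (hT : 0 < T) (hA : A ≤ 0)
    (hC : 0 ≤ C) (η : ℝ → ℝ)
    (hηn : ∀ t ∈ Icc (0 : ℝ) T, 0 ≤ η t)
    (hη : ∀ t ∈ Icc (0 : ℝ) T, HasDerivAt η (B * η t ^ 2 + 2 * A * η t - C) t)
    (l : ℝ → ℝ)
    (hl : ∀ t, l t = ∫ s in (0 : ℝ)..t, Real.exp (-2 * B * ∫ u in s..t, η u)) :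
    ∫ t in (0 : ℝ)..T, B * η t ^ 2 * l t ≤ ∫ t in (0 : ℝ)..T, η t := by
  have hηc : ContinuousOn η (Icc 0 T) := fun t ht => (hη t ht).continuousAt.continuousWithinAt
  obtain rfl : l = duhamel (-2 * B) η 0 := funext hl
  exact integral_mul_sq_mul_le_integral_of_riccati hT.le hA hC hη hηn
    (continuousOn_duhamel hT.le hηc) (fun t ht => hasDerivAt_duhamel_of_continuousOn hT.le hηc ht)
    (duhamel_self _ _ _) fun t ht => duhamel_nonneg η ht.1

theorem stmt_15 (T A B C D : ℝ) (hT : 0 < T) (hB : 0 ≤ B) (hA : A ≤ 0)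
    (hC : 0 ≤ C) (hD : 0 ≤ D) (η : ℝ → ℝ)
    (hηc : ContinuousOn η (Icc 0 T))
    (hηn : ∀ t ∈ Icc (0 : ℝ) T, 0 ≤ η t)
    (hη : ∀ t ∈ Icc (0 : ℝ) T, HasDerivAt η (B * η t ^ 2 + 2 * A * η t - C) t)
    (hηT : η T = D)
    (l : ℝ → ℝ)
    (hl : ∀ t, l t = ∫ s in (0 : ℝ)..t, Real.exp (-2 * B * ∫ u in s..t, η u)) :
    ∫ t in (0 : ℝ)..T, B * η t ^ 2 * l t ≤ ∫ t in (0 : ℝ)..T, η t :=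
  stmt_15_general T A B C hT hA hC η hηn hη l hl
end
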